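/- arXiv:0912.1749 — 2 statements merged into one kernel-verified Lean document; each statement's English description precedes it below -/
import Mathlib

section
/- Let q = 2p be even with p ≥ 2 and λ = 2·cos(π/q). For every ℓ ∈ ℕ and Lebesgue-almost every (t,v) ∈ Ω_{1/λ}, writing (t_i, v_i) = 𝒯_{1/λ}^i(t,v) and (s_i, w_i) = M(t_i, v_i) for 0 ≤ i ≤ ℓ, one has: (s_i, w_i) ∈ Ω_{1/2} for all i; 𝒯_{1/2}(s_{i+1}, w_{i+1}) = (s_i, w_i) for 0 ≤ i ≤ ℓ−1; and Θ⁺(s_i, w_i) = Θ⁻(t_i, v_i) and Θ⁻(s_i, w_i) = Θ⁺(t_i, v_i) for 0 ≤ i ≤ ℓ. Consequently, any ℓ+2 consecutive approximation coefficients Θ_{n−1}, Θ_n, …, Θ_{n+ℓ} arising in the system (Ω_{1/λ}, 𝒯_{1/λ}) arise, in reversed order, as consecutive approximation coefficients in the system (Ω_{1/2}, 𝒯_{1/2}). -/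
/-- The digit `d(x) = ⌊|1/(λx)| + 1 - α⌋` of the α-Rosen continued fraction. -/
noncomputable def rosenD (lam α x : ℝ) : ℤ := ⌊|1 / (lam * x)| + 1 - α⌋

/-- The α-Rosen continued fraction map `T_α` on `[(α-1)λ, αλ)`. -/
noncomputable def rosenT (lam α x : ℝ) : ℝ :=
  if x = 0 then 0 else Real.sign x / x - lam * (rosenD lam α x : ℝ)

/-- `x` is `G_q`-irrational: the orbit of `x` under `T_α` never hits `0`. -/
def GIrrational (lam α x : ℝ) : Prop := ∀ n : ℕ, (rosenT lam α)^[n] x ≠ 0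

/-- The recursion `u_n = d_n(x)·λ·u_{n-1} + ε_n(x)·u_{n-2}` for the numerators and
denominators of the α-Rosen convergents, with the index shifted by one:
`rosenPQ lam α x a b n = u_{n-1}` where `u_{-1} = a`, `u_0 = b`. -/
noncomputable def rosenPQ (lam α x a b : ℝ) : ℕ → ℝ
  | 0 => a
  | 1 => b
  | n + 2 =>
      (rosenD lam α ((rosenT lam α)^[n] x) : ℝ) * lam * rosenPQ lam α x a b (n + 1)
        + Real.sign ((rosenT lam α)^[n] x) * rosenPQ lam α x a b n

/-- The approximation coefficient `Θ_n(x) = q_n² · |x - p_n/q_n|` of the α-Rosen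
expansion of `x` (with `p_{-1}=1, q_{-1}=0, p_0=0, q_0=1`). -/
noncomputable def rosenTheta (lam α x : ℝ) (n : ℕ) : ℝ :=
  (rosenPQ lam α x 0 1 (n + 1)) ^ 2 *
    |x - rosenPQ lam α x 1 0 (n + 1) / rosenPQ lam α x 0 1 (n + 1)|

/-- The natural extension map `𝒯_α(t,v) = (T_α(t), 1/(d(t)λ + ε(t)v))`. -/
noncomputable def rosenNE (lam α : ℝ) (tv : ℝ × ℝ) : ℝ × ℝ :=
  (rosenT lam α tv.1, 1 / ((rosenD lam α tv.1 : ℝ) * lam + Real.sign tv.1 * tv.2))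

open MeasureTheory

/-- `φ_n = T_{1/2}^n(-λ/2)`. -/
noncomputable def phiSeq (lam : ℝ) (n : ℕ) : ℝ := (rosenT lam (1 / 2))^[n] (-(lam / 2))

/-- `L_1 = 1/(λ+1)` and `L_n = 1/(λ - L_{n-1})`. -/
noncomputable def Lseq (lam : ℝ) : ℕ → ℝ
  | 0 => 0
  | 1 => 1 / (lam + 1)
  | n + 2 => 1 / (lam - Lseq lam (n + 1))

/-- The natural extension domain for `α = 1/2`, even `q = 2p`:
`Ω_{1/2} = (⋃_{n=1}^{p-1} [φ_{n-1}, φ_n) × [0, L_n]) ∪ ([0, λ/2) × [0, 1])`. -/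
noncomputable def OmegaHalf (lam : ℝ) (p : ℕ) : Set (ℝ × ℝ) :=
  (⋃ n ∈ Finset.Icc 1 (p - 1),
      Set.Ico (phiSeq lam (n - 1)) (phiSeq lam n) ×ˢ Set.Icc (0 : ℝ) (Lseq lam n)) ∪
    Set.Ico (0 : ℝ) (lam / 2) ×ˢ Set.Icc (0 : ℝ) 1

/-- The natural extension domain for `α = 1/λ`, even `q = 2p`:
`Ω_{1/λ} = (⋃_{n=1}^{p-2} [-L_{p-n}, -L_{p-n-1}) × [0, -φ_{p-n-1}]) ∪ ([-L_1, 1) × [0, λ/2])`. -/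
noncomputable def OmegaInvLam (lam : ℝ) (p : ℕ) : Set (ℝ × ℝ) :=
  (⋃ n ∈ Finset.Icc 1 (p - 2),
      Set.Ico (-Lseq lam (p - n)) (-Lseq lam (p - n - 1)) ×ˢ
        Set.Icc (0 : ℝ) (-phiSeq lam (p - n - 1))) ∪
    Set.Ico (-Lseq lam 1) (1 : ℝ) ×ˢ Set.Icc (0 : ℝ) (lam / 2)

/-- The mirroring isomorphism `M(t,v) = (-v,-t)` for `t < 0` and `(v,t)` for `t ≥ 0`. -/
noncomputable def Mmap (tv : ℝ × ℝ) : ℝ × ℝ :=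
  if tv.1 < 0 then (-tv.2, -tv.1) else (tv.2, tv.1)

/-- `Θ⁻(t,v) = v/(1+tv)`, the approximation coefficient `Θ_{n-1}`. -/
noncomputable def ThetaMinus (tv : ℝ × ℝ) : ℝ := tv.2 / (1 + tv.1 * tv.2)

/-- `Θ⁺(t,v) = |t|/(1+tv)`, the approximation coefficient `Θ_n`. -/
noncomputable def ThetaPlus (tv : ℝ × ℝ) : ℝ := |tv.1| / (1 + tv.1 * tv.2)



open Real

namespace T321

noncomputable def ss (p k : ℕ) : ℝ := Real.sin ((k : ℝ) * (Real.pi / (2 * p)))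
noncomputable def tt (p k : ℕ) : ℝ := Real.sin ((2 * (k : ℝ) - 1) * (Real.pi / (4 * p)))

variable {p : ℕ} {lam : ℝ}

lemma theta_pos (hp : 2 ≤ p) : 0 < Real.pi / (2 * p) := by
  apply div_pos Real.pi_pos; positivity

lemma theta_le (hp : 2 ≤ p) : Real.pi / (2 * p) ≤ Real.pi / 4 := by
  apply div_le_div_of_nonneg_left Real.pi_pos.le (by norm_num)
  have : (2:ℝ) ≤ (p:ℝ) := by exact_mod_cast hp
  linarith

lemma ss_rec (hp : 2 ≤ p) (hlam : lam = 2 * Real.cos (Real.pi / (2 * (p:ℝ)))) (k : ℕ) :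
    ss p (k + 2) = lam * ss p (k + 1) - ss p k := by
  have h1 : ((k:ℝ) + 2) * (Real.pi / (2 * p)) = ((k:ℝ) + 1) * (Real.pi / (2 * p)) + Real.pi / (2 * p) := by ring
  have h2 : (k : ℝ) * (Real.pi / (2 * p)) = ((k:ℝ) + 1) * (Real.pi / (2 * p)) - Real.pi / (2 * p) := by ring
  unfold ss
  push_cast
  rw [h1, h2, Real.sin_add, Real.sin_sub, hlam]
  ring

lemma tt_rec (hp : 2 ≤ p) (hlam : lam = 2 * Real.cos (Real.pi / (2 * (p:ℝ)))) (k : ℕ) :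
    tt p (k + 2) = lam * tt p (k + 1) - tt p k := by
  have hp0 : (p : ℝ) ≠ 0 := by positivity
  have hhalf : Real.pi / (2 * p) = 2 * (Real.pi / (4 * p)) := by field_simp; ring
  have h1 : (2 * ((k:ℝ) + 2) - 1) * (Real.pi / (4 * p)) =
      (2 * ((k:ℝ) + 1) - 1) * (Real.pi / (4 * p)) + Real.pi / (2 * p) := by rw [hhalf]; ring
  have h2 : (2 * (k:ℝ) - 1) * (Real.pi / (4 * p)) =
      (2 * ((k:ℝ) + 1) - 1) * (Real.pi / (4 * p)) - Real.pi / (2 * p) := by rw [hhalf]; ring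
  unfold tt
  push_cast
  rw [h1, h2, Real.sin_add, Real.sin_sub, hlam]
  ring

lemma ss_pos (hp : 2 ≤ p) {k : ℕ} (hk1 : 1 ≤ k) (hk2 : k ≤ p) : 0 < ss p k := by
  have h0 := theta_pos hp
  apply Real.sin_pos_of_pos_of_lt_pi
  · have : (1:ℝ) ≤ (k:ℝ) := by exact_mod_cast hk1
    nlinarith
  · have hk : (k:ℝ) ≤ (p:ℝ) := by exact_mod_cast hk2
    have hp0 : (0:ℝ) < (p:ℝ) := by positivity
    have : (k:ℝ) * (Real.pi / (2 * p)) ≤ (p:ℝ) * (Real.pi / (2*p)) := by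
      apply mul_le_mul_of_nonneg_right hk h0.le
    have hhalf : (p:ℝ) * (Real.pi / (2*p)) = Real.pi / 2 := by field_simp
    nlinarith [Real.pi_pos]

lemma tt_pos (hp : 2 ≤ p) {k : ℕ} (hk1 : 1 ≤ k) (hk2 : k ≤ p) : 0 < tt p k := by
  have h0 : (0:ℝ) < Real.pi / (4 * p) := by apply div_pos Real.pi_pos; positivity
  apply Real.sin_pos_of_pos_of_lt_pi
  · have : (1:ℝ) ≤ (k:ℝ) := by exact_mod_cast hk1
    nlinarith
  · have hk : (k:ℝ) ≤ (p:ℝ) := by exact_mod_cast hk2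
    have hp0 : (0:ℝ) < (p:ℝ) := by positivity
    have h2 : (2*(k:ℝ)-1) * (Real.pi / (4 * p)) ≤ (2*(p:ℝ)) * (Real.pi / (4*p)) := by
      apply mul_le_mul_of_nonneg_right (by linarith) h0.le
    have hhalf : (2*(p:ℝ)) * (Real.pi / (4*p)) = Real.pi / 2 := by field_simp; ring
    nlinarith [Real.pi_pos]

lemma ss_lt (hp : 2 ≤ p) {k l : ℕ} (hkl : k < l) (hl : l ≤ p) : ss p k < ss p l := by
  have h0 := theta_pos hp
  have hp0 : (0:ℝ) < (p:ℝ) := by positivity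
  have hhalf : (p:ℝ) * (Real.pi / (2*p)) = Real.pi / 2 := by field_simp
  have hk : (k:ℝ) < (l:ℝ) := by exact_mod_cast hkl
  have hl' : (l:ℝ) ≤ (p:ℝ) := by exact_mod_cast hl
  apply Real.strictMonoOn_sin
  · constructor
    · nlinarith [Real.pi_pos]
    · nlinarith [mul_le_mul_of_nonneg_right hl' h0.le]
  · constructor
    · nlinarith [Real.pi_pos]
    · nlinarith [mul_le_mul_of_nonneg_right hl' h0.le]
  · nlinarith

lemma tt_lt (hp : 2 ≤ p) {k l : ℕ} (hk : 1 ≤ k) (hkl : k < l) (hl : l ≤ p) : tt p k < tt p l := by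
  have h0 : (0:ℝ) < Real.pi / (4 * p) := by apply div_pos Real.pi_pos; positivity
  have hp0 : (0:ℝ) < (p:ℝ) := by positivity
  have hhalf : (2*(p:ℝ)) * (Real.pi / (4*p)) = Real.pi / 2 := by field_simp; ring
  have hk1 : (1:ℝ) ≤ (k:ℝ) := by exact_mod_cast hk
  have hkl' : (k:ℝ) < (l:ℝ) := by exact_mod_cast hkl
  have hl' : (l:ℝ) ≤ (p:ℝ) := by exact_mod_cast hl
  apply Real.strictMonoOn_sin
  · constructor
    · nlinarith [Real.pi_pos]
    · nlinarith [mul_le_mul_of_nonneg_right (by linarith : 2*(k:ℝ)-1 ≤ 2*(p:ℝ)) h0.le]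
  · constructor
    · nlinarith [Real.pi_pos]
    · nlinarith [mul_le_mul_of_nonneg_right (by linarith : 2*(l:ℝ)-1 ≤ 2*(p:ℝ)) h0.le]
  · nlinarith

end T321

namespace T321

variable {p : ℕ} {lam : ℝ}

lemma ss_p_eq (hp : 2 ≤ p) : ss p p = 1 := by
  have hp0 : (p:ℝ) ≠ 0 := by positivity
  have : (p:ℝ) * (Real.pi / (2 * p)) = Real.pi / 2 := by field_simp
  rw [ss, this, Real.sin_pi_div_two]

lemma ss_pm1_eq (hp : 2 ≤ p) (hlam : lam = 2 * Real.cos (Real.pi / (2 * (p:ℝ)))) :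
    ss p (p - 1) = lam / 2 := by
  have hp0 : (p:ℝ) ≠ 0 := by positivity
  have hc : ((p - 1 : ℕ) : ℝ) = (p:ℝ) - 1 := by
    have : 1 ≤ p := by omega
    push_cast [this]; ring
  have harg : ((p:ℝ) - 1) * (Real.pi / (2 * p)) = Real.pi / 2 - Real.pi / (2 * p) := by
    field_simp
  rw [ss, hc, harg, Real.sin_pi_div_two_sub, hlam]; ring

lemma tt_p_pos (hp : 2 ≤ p) : 0 < tt p p := tt_pos hp (by omega) le_rfl

lemma tt_pp1_eq (hp : 2 ≤ p) : tt p (p + 1) = tt p p := by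
  have hp0 : (p:ℝ) ≠ 0 := by positivity
  have h1 : (2 * ((p:ℝ) + 1) - 1) * (Real.pi / (4 * p)) =
      Real.pi / 2 + Real.pi / (4 * p) := by field_simp; ring
  have h2 : (2 * (p:ℝ) - 1) * (Real.pi / (4 * p)) =
      Real.pi / 2 - Real.pi / (4 * p) := by field_simp; ring
  unfold tt
  push_cast
  rw [h1, h2, Real.sin_pi_div_two_sub, Real.sin_add, Real.sin_pi_div_two,
    Real.cos_pi_div_two]
  ring

/-- `L_{p-1} = λ - 1` in disguise : `tt (p-1) = (λ-1) tt p`. -/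
lemma tt_pm1_eq (hp : 2 ≤ p) (hlam : lam = 2 * Real.cos (Real.pi / (2 * (p:ℝ)))) :
    tt p (p - 1) = (lam - 1) * tt p p := by
  obtain ⟨m, rfl⟩ : ∃ m, p = m + 2 := ⟨p - 2, by omega⟩
  have hrec := tt_rec hp hlam (m + 1)
  have h1 := tt_pp1_eq hp
  have : m + 2 - 1 = m + 1 := by omega
  rw [this]
  have h2 : m + 1 + 2 = (m + 2) + 1 := by omega
  rw [h2] at hrec
  rw [h1] at hrec
  linarith

lemma sin_sq_sub (a b : ℝ) : Real.sin (a - b) * Real.sin (a + b) =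
    Real.sin a ^ 2 - Real.sin b ^ 2 := by
  rw [Real.sin_sub, Real.sin_add]
  nlinarith [Real.sin_sq_add_cos_sq a, Real.sin_sq_add_cos_sq b]

lemma ss_one_pos (hp : 2 ≤ p) : 0 < ss p 1 := ss_pos hp le_rfl (by omega)

lemma ss_prod (hp : 2 ≤ p) (k : ℕ) :
    ss p k * ss p (k + 2) = ss p (k + 1) ^ 2 - ss p 1 ^ 2 := by
  unfold ss
  push_cast
  have h1 : (k:ℝ) * (Real.pi / (2*p)) = ((k:ℝ)+1) * (Real.pi / (2*p)) - 1 * (Real.pi / (2*p)) := by ring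
  have h2 : ((k:ℝ)+2) * (Real.pi / (2*p)) = ((k:ℝ)+1) * (Real.pi / (2*p)) + 1 * (Real.pi / (2*p)) := by ring
  rw [h1, h2, sin_sq_sub]

lemma tt_prod (hp : 2 ≤ p) (k : ℕ) :
    tt p k * tt p (k + 2) = tt p (k + 1) ^ 2 - ss p 1 ^ 2 := by
  have hp0 : (p:ℝ) ≠ 0 := by positivity
  unfold tt ss
  push_cast
  have hb : (1:ℝ) * (Real.pi / (2 * p)) = 2 * (Real.pi / (4 * p)) := by field_simp; ring
  have h1 : (2*(k:ℝ) - 1) * (Real.pi / (4*p)) =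
      (2*((k:ℝ)+1) - 1) * (Real.pi / (4*p)) - 1 * (Real.pi / (2*p)) := by rw [hb]; ring
  have h2 : (2*((k:ℝ)+2) - 1) * (Real.pi / (4*p)) =
      (2*((k:ℝ)+1) - 1) * (Real.pi / (4*p)) + 1 * (Real.pi / (2*p)) := by rw [hb]; ring
  rw [h1, h2, sin_sq_sub]

lemma lam_lt_two (hp : 2 ≤ p) (hlam : lam = 2 * Real.cos (Real.pi / (2 * (p:ℝ)))) :
    lam < 2 := by
  have h0 := theta_pos hp
  have : Real.cos (Real.pi / (2 * p)) < 1 := by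
    have := Real.cos_lt_cos_of_nonneg_of_le_pi (le_refl (0:ℝ))
      (by linarith [theta_le hp, Real.pi_pos] : Real.pi / (2*p) ≤ Real.pi) h0
    simpa using this
  nlinarith

lemma two_le_lam_sq (hp : 2 ≤ p) (hlam : lam = 2 * Real.cos (Real.pi / (2 * (p:ℝ)))) :
    2 ≤ lam ^ 2 ∧ 1 < lam := by
  have h0 := theta_pos hp
  have h4 := theta_le hp
  have hcos : Real.sqrt 2 / 2 ≤ Real.cos (Real.pi / (2 * p)) := by
    rw [← Real.cos_pi_div_four]
    apply Real.cos_le_cos_of_nonneg_of_le_pi h0.le _ h4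
    linarith [Real.pi_le_four, Real.pi_pos]
  have h2 : Real.sqrt 2 ^ 2 = 2 := Real.sq_sqrt (by norm_num)
  have hs2 : (1:ℝ) ≤ Real.sqrt 2 := by nlinarith [Real.sqrt_nonneg 2]
  constructor
  · nlinarith
  · nlinarith

end T321

namespace T321

variable {p : ℕ} {lam α : ℝ}

lemma sign_div_self {t : ℝ} (ht : t ≠ 0) : Real.sign t / t = 1 / |t| := by
  rcases lt_or_gt_of_ne ht with h | h
  · rw [Real.sign_of_neg h, abs_of_neg h]; field_simp
  · rw [Real.sign_of_pos h, abs_of_pos h]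

lemma rosenD_eq (hl : 0 < lam) {x : ℝ} (hx : x ≠ 0) :
    rosenD lam α x = ⌊1 / (lam * |x|) + 1 - α⌋ := by
  unfold rosenD
  congr 1
  rw [abs_div, abs_mul, abs_of_pos hl, abs_one]

lemma rosenT_eq (hl : 0 < lam) {x : ℝ} (hx : x ≠ 0) :
    rosenT lam α x = 1 / |x| - lam * (rosenD lam α x : ℝ) := by
  unfold rosenT
  rw [if_neg hx, sign_div_self hx]

lemma rosenD_bounds (hl : 0 < lam) {x : ℝ} (hx : x ≠ 0) :
    (rosenD lam α x : ℝ) ≤ 1 / (lam * |x|) + 1 - α ∧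
      1 / (lam * |x|) + 1 - α < (rosenD lam α x : ℝ) + 1 := by
  rw [rosenD_eq hl hx]
  exact ⟨Int.floor_le _, Int.lt_floor_add_one _⟩

lemma rosenD_eq_of (hl : 0 < lam) {x : ℝ} (hx : x ≠ 0) {d : ℤ}
    (h1 : (d : ℝ) ≤ 1 / (lam * |x|) + 1 - α) (h2 : 1 / (lam * |x|) + 1 - α < d + 1) :
    rosenD lam α x = d := by
  rw [rosenD_eq hl hx]
  exact Int.floor_eq_iff.mpr ⟨h1, h2⟩ |>.trans rfl

end T321

namespace T321

variable {p : ℕ} {lam : ℝ}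

lemma tt_zero : tt p 0 = -tt p 1 := by
  unfold tt
  push_cast
  rw [show (2*(0:ℝ)-1) * (Real.pi/(4*p)) = -((2*1-1) * (Real.pi/(4*p))) by ring, Real.sin_neg]

lemma Lseq_one : Lseq lam 1 = 1 / (lam + 1) := rfl

lemma Lseq_succ (m : ℕ) (hm : 1 ≤ m) : Lseq lam (m + 1) = 1 / (lam - Lseq lam m) := by
  obtain ⟨j, rfl⟩ : ∃ j, m = j + 1 := ⟨m - 1, by omega⟩
  rfl

lemma Lseq_eq (hp : 2 ≤ p) (hlam : lam = 2 * Real.cos (Real.pi / (2 * (p:ℝ)))) :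
    ∀ n, 1 ≤ n → n ≤ p - 1 → Lseq lam n = tt p n / tt p (n + 1) := by
  intro n
  induction n using Nat.strong_induction_on with
  | _ n ih =>
    match n with
    | 0 => omega
    | 1 =>
      intro _ _
      have h2 : tt p 2 = (lam + 1) * tt p 1 := by
        have := tt_rec hp hlam 0
        rw [tt_zero] at this
        linarith
      have h1 : 0 < tt p 1 := tt_pos hp le_rfl (by omega)
      rw [Lseq_one, h2]
      rw [div_mul_eq_div_div_swap, div_self h1.ne']
    | (m + 2) =>
      intro _ hle
      have hIH := ih (m + 1) (by omega) (by omega) (by omega)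
      have h1 : 0 < tt p (m + 1) := tt_pos hp (by omega) (by omega)
      have h2 : 0 < tt p (m + 2) := tt_pos hp (by omega) (by omega)
      have h3 : 0 < tt p (m + 3) := tt_pos hp (by omega) (by omega)
      have hrec : tt p (m + 3) = lam * tt p (m + 2) - tt p (m + 1) := tt_rec hp hlam (m + 1)
      have hdef : Lseq lam (m + 2) = 1 / (lam - Lseq lam (m + 1)) := rfl
      have hIH' : Lseq lam (m + 1) = tt p (m + 1) / tt p (m + 2) := hIH
      have key : lam - Lseq lam (m + 1) = tt p (m + 3) / tt p (m + 2) := by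
        rw [hIH', hrec]
        field_simp
      rw [hdef, key, one_div_div]

lemma Lseq_pos (hp : 2 ≤ p) (hlam : lam = 2 * Real.cos (Real.pi / (2 * (p:ℝ))))
    {n : ℕ} (h1 : 1 ≤ n) (h2 : n ≤ p - 1) : 0 < Lseq lam n := by
  rw [Lseq_eq hp hlam n h1 h2]
  exact div_pos (tt_pos hp h1 (by omega)) (tt_pos hp (by omega) (by omega))

lemma Lseq_lt_succ (hp : 2 ≤ p) (hlam : lam = 2 * Real.cos (Real.pi / (2 * (p:ℝ))))
    {n : ℕ} (h1 : 1 ≤ n) (h2 : n + 1 ≤ p - 1) : Lseq lam n < Lseq lam (n + 1) := by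
  rw [Lseq_eq hp hlam n h1 (by omega), Lseq_eq hp hlam (n+1) (by omega) h2]
  have h3 : 0 < tt p (n + 1) := tt_pos hp (by omega) (by omega)
  have h4 : 0 < tt p (n + 2) := tt_pos hp (by omega) (by omega)
  rw [div_lt_div_iff₀ h3 h4]
  have := tt_prod hp n
  nlinarith [ss_one_pos hp]

lemma Lseq_mono (hp : 2 ≤ p) (hlam : lam = 2 * Real.cos (Real.pi / (2 * (p:ℝ))))
    {m n : ℕ} (h1 : 1 ≤ m) (hmn : m ≤ n) (h2 : n ≤ p - 1) : Lseq lam m ≤ Lseq lam n := by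
  induction n with
  | zero => omega
  | succ k ihk =>
    rcases Nat.eq_or_lt_of_le hmn with h | h
    · rw [h]
    · have : Lseq lam m ≤ Lseq lam k := ihk (by omega) (by omega)
      have hk1 : 1 ≤ k := by omega
      exact this.trans (Lseq_lt_succ hp hlam hk1 h2).le

lemma Lseq_last (hp : 2 ≤ p) (hlam : lam = 2 * Real.cos (Real.pi / (2 * (p:ℝ)))) :
    Lseq lam (p - 1) = lam - 1 := by
  have h1 : Lseq lam (p-1) = tt p (p-1) / tt p (p-1+1) := Lseq_eq hp hlam (p-1) (by omega) le_rfl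
  have h2 : p - 1 + 1 = p := by omega
  rw [h1, h2, tt_pm1_eq hp hlam]
  field_simp [(tt_p_pos hp).ne']

lemma Lseq_le_lam_sub_one (hp : 2 ≤ p) (hlam : lam = 2 * Real.cos (Real.pi / (2 * (p:ℝ))))
    {n : ℕ} (h1 : 1 ≤ n) (h2 : n ≤ p - 1) : Lseq lam n ≤ lam - 1 := by
  rw [← Lseq_last hp hlam]
  exact Lseq_mono hp hlam h1 h2 le_rfl

/-- `φ_n = -(s_{p-1-n}/s_{p-n})` for `n ≤ p-1`. -/
lemma phi_eq (hp : 2 ≤ p) (hlam : lam = 2 * Real.cos (Real.pi / (2 * (p:ℝ)))) :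
    ∀ n, n ≤ p - 1 → phiSeq lam n = -(ss p (p - 1 - n) / ss p (p - n)) := by
  have hl1 : 1 < lam := (two_le_lam_sq hp hlam).2
  have hl0 : 0 < lam := by linarith
  intro n
  induction n with
  | zero =>
    intro _
    have h1 : p - 0 = p := by omega
    have h2 : p - 1 - 0 = p - 1 := by omega
    rw [phiSeq, Function.iterate_zero_apply, h1, h2, ss_p_eq hp, ss_pm1_eq hp hlam]
    norm_num
  | succ n ihn =>
    intro hn1
    obtain ⟨k, hk⟩ : ∃ k, p - 1 - n = k := ⟨_, rfl⟩
    have hk1 : 1 ≤ k := by omega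
    have hkp : k + 1 ≤ p := by omega
    have hsk : 0 < ss p k := ss_pos hp hk1 (by omega)
    have hsk1 : 0 < ss p (k + 1) := ss_pos hp (by omega) hkp
    have hpk : p - n = k + 1 := by omega
    have hx : phiSeq lam n = -(ss p k / ss p (k + 1)) := by
      have := ihn (by omega); rw [hk, hpk] at this; exact this
    set x := phiSeq lam n with hxdef
    have hxneg : x < 0 := by
      rw [hx]
      have : 0 < ss p k / ss p (k+1) := div_pos hsk hsk1
      linarith
    have hxne : x ≠ 0 := hxneg.ne
    have habs : |x| = ss p k / ss p (k + 1) := by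
      rw [hx, abs_neg, abs_of_pos (div_pos hsk hsk1)]
    have hssrec : ss p (k + 1) = ss p k * Real.cos (Real.pi/(2*p)) +
        Real.cos ((k:ℝ) * (Real.pi/(2*p))) * Real.sin (Real.pi/(2*p)) := by
      unfold ss
      push_cast
      rw [show ((k:ℝ)+1) * (Real.pi/(2*p)) = (k:ℝ) * (Real.pi/(2*p)) + Real.pi/(2*p) by ring,
        Real.sin_add]
    have hcosk : 0 ≤ Real.cos ((k:ℝ) * (Real.pi/(2*p))) := by
      apply Real.cos_nonneg_of_mem_Icc
      constructor
      · have h0 := theta_pos hp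
        have h1 : (0:ℝ) ≤ (k:ℝ) * (Real.pi/(2*p)) := by positivity
        linarith [Real.pi_pos]
      · have h0 := theta_pos hp
        have hkpr : (k:ℝ) ≤ (p:ℝ) := by exact_mod_cast (by omega : k ≤ p)
        have hp0 : (0:ℝ) < (p:ℝ) := by positivity
        have hhalf : (p:ℝ) * (Real.pi / (2*p)) = Real.pi / 2 := by field_simp
        nlinarith
    have hsin1 : Real.sin (Real.pi/(2*p)) = ss p 1 := by unfold ss; norm_num
    have hcoslam : Real.cos (Real.pi/(2*p)) = lam / 2 := by rw [hlam]; ring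
    have hlow : lam * ss p k ≤ 2 * ss p (k + 1) := by
      rw [hssrec, hsin1, hcoslam]
      nlinarith [mul_nonneg hcosk (ss_one_pos hp).le]
    have hss1k : ss p 1 ≤ ss p k := by
      rcases Nat.eq_or_lt_of_le hk1 with h | h
      · rw [← h]
      · exact (ss_lt hp h (by omega)).le
    have hhigh : 2 * ss p (k + 1) < 3 * (lam * ss p k) := by
      rw [hssrec, hsin1, hcoslam]
      have hck : Real.cos ((k:ℝ) * (Real.pi/(2*p))) ≤ 1 := Real.cos_le_one _
      nlinarith [ss_one_pos hp]
    have hd : rosenD lam (1/2) x = 1 := by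
      apply rosenD_eq_of hl0 hxne
      · push_cast
        rw [habs, show lam * (ss p k / ss p (k+1)) = (lam * ss p k) / ss p (k+1) by ring,
          one_div_div]
        have he : (1:ℝ)/2 ≤ ss p (k+1) / (lam * ss p k) := by
          rw [le_div_iff₀ (by positivity)]
          nlinarith
        linarith
      · push_cast
        rw [habs, show lam * (ss p k / ss p (k+1)) = (lam * ss p k) / ss p (k+1) by ring,
          one_div_div]
        have he : ss p (k+1) / (lam * ss p k) < 3/2 := by
          rw [div_lt_iff₀ (by positivity)]
          nlinarith
        linarith
    have hstep : phiSeq lam (n+1) = rosenT lam (1/2) x := by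
      rw [phiSeq, Function.iterate_succ_apply']
      rfl
    rw [hstep, rosenT_eq hl0 hxne, hd, habs]
    have hrec : ss p (k + 1) = lam * ss p k - ss p (k - 1) := by
      obtain ⟨j, rfl⟩ : ∃ j, k = j + 1 := ⟨k - 1, by omega⟩
      have := ss_rec hp hlam j
      simpa using this
    have h1 : p - 1 - (n + 1) = k - 1 := by omega
    have h2 : p - (n + 1) = k := by omega
    rw [h1, h2, one_div_div]
    push_cast
    rw [hrec]
    field_simp
    ring

end T321

namespace T321

variable {p : ℕ} {lam : ℝ}

lemma phi_zero : phiSeq lam 0 = -(lam / 2) := by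
  rw [phiSeq, Function.iterate_zero_apply]

lemma phi_last (hp : 2 ≤ p) (hlam : lam = 2 * Real.cos (Real.pi / (2 * (p:ℝ)))) :
    phiSeq lam (p - 1) = 0 := by
  rw [phi_eq hp hlam (p-1) le_rfl]
  have h0 : p - 1 - (p - 1) = 0 := by omega
  rw [h0]
  have : ss p 0 = 0 := by unfold ss; norm_num
  rw [this]
  simp

lemma phi_neg (hp : 2 ≤ p) (hlam : lam = 2 * Real.cos (Real.pi / (2 * (p:ℝ))))
    {n : ℕ} (hn : n ≤ p - 2) : phiSeq lam n < 0 := by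
  rw [phi_eq hp hlam n (by omega)]
  have h1 : 1 ≤ p - 1 - n := by omega
  have h2 : 0 < ss p (p - 1 - n) := ss_pos hp h1 (by omega)
  have h3 : 0 < ss p (p - n) := ss_pos hp (by omega) (by omega)
  have : 0 < ss p (p-1-n) / ss p (p-n) := div_pos h2 h3
  linarith

lemma phi_lt_succ (hp : 2 ≤ p) (hlam : lam = 2 * Real.cos (Real.pi / (2 * (p:ℝ))))
    {n : ℕ} (hn : n + 1 ≤ p - 1) : phiSeq lam n < phiSeq lam (n + 1) := by
  rw [phi_eq hp hlam n (by omega), phi_eq hp hlam (n+1) (by omega)]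
  obtain ⟨k, hk⟩ : ∃ k, p - 1 - (n+1) = k := ⟨_, rfl⟩
  have e1 : p - 1 - n = k + 1 := by omega
  have e2 : p - n = k + 2 := by omega
  have e3 : p - (n + 1) = k + 1 := by omega
  rw [hk, e1, e2, e3, neg_lt_neg_iff]
  have h1 : 0 < ss p (k+1) := ss_pos hp (by omega) (by omega)
  have h2 : 0 < ss p (k+2) := ss_pos hp (by omega) (by omega)
  have h3 : 0 ≤ ss p k := by
    rcases Nat.eq_zero_or_pos k with h | h
    · subst h; unfold ss; norm_num
    · exact (ss_pos hp h (by omega)).le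
  rw [div_lt_div_iff₀ h1 h2]
  have := ss_prod hp k
  nlinarith [ss_one_pos hp]

lemma phi_mono (hp : 2 ≤ p) (hlam : lam = 2 * Real.cos (Real.pi / (2 * (p:ℝ))))
    {m n : ℕ} (hmn : m ≤ n) (h2 : n ≤ p - 1) : phiSeq lam m ≤ phiSeq lam n := by
  induction n with
  | zero =>
    have h0 : m = 0 := Nat.le_zero.mp hmn
    rw [h0]
  | succ k ihk =>
    rcases Nat.eq_or_lt_of_le hmn with h | h
    · rw [h]
    · exact (ihk (by omega) (by omega)).trans (phi_lt_succ hp hlam h2).le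

lemma neg_phi_le (hp : 2 ≤ p) (hlam : lam = 2 * Real.cos (Real.pi / (2 * (p:ℝ))))
    {n : ℕ} (hn : n ≤ p - 1) : -phiSeq lam n ≤ lam / 2 := by
  have := phi_mono hp hlam (Nat.zero_le n) hn
  rw [phi_zero] at this
  linarith

lemma inv_lam_le_neg_phi (hp : 2 ≤ p) (hlam : lam = 2 * Real.cos (Real.pi / (2 * (p:ℝ))))
    {n : ℕ} (hn : n ≤ p - 2) : 1 / lam ≤ -phiSeq lam n := by
  have hmono := phi_mono hp hlam (show n ≤ p - 2 from hn) (by omega : p - 2 ≤ p - 1)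
  have hpm2 : phiSeq lam (p - 2) = -(1 / lam) := by
    rw [phi_eq hp hlam (p-2) (by omega)]
    have e1 : p - 1 - (p - 2) = 1 := by omega
    have e2 : p - (p - 2) = 2 := by omega
    rw [e1, e2]
    have hs2 : ss p 2 = lam * ss p 1 := by
      have := ss_rec hp hlam 0
      have h0 : ss p 0 = 0 := by unfold ss; norm_num
      rw [h0] at this
      simpa using this
    rw [hs2]
    have h1 : 0 < ss p 1 := ss_one_pos hp
    have hl0 : 0 < lam := by nlinarith [(two_le_lam_sq hp hlam).2]
    field_simp
  rw [hpm2] at hmono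
  linarith

/-- `(λ + φ_{m+1})·(-φ_m) = 1` with positive factor, for `m + 1 ≤ p - 1`. -/
lemma phi_inv (hp : 2 ≤ p) (hlam : lam = 2 * Real.cos (Real.pi / (2 * (p:ℝ))))
    {m : ℕ} (hm : m + 1 ≤ p - 1) :
    0 < lam + phiSeq lam (m + 1) ∧ (lam + phiSeq lam (m + 1)) * (-phiSeq lam m) = 1 := by
  rw [phi_eq hp hlam (m+1) (by omega), phi_eq hp hlam m (by omega)]
  obtain ⟨k, hk⟩ : ∃ k, p - 1 - (m+1) = k := ⟨_, rfl⟩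
  have e1 : p - (m + 1) = k + 1 := by omega
  have e2 : p - 1 - m = k + 1 := by omega
  have e3 : p - m = k + 2 := by omega
  rw [hk, e1, e2, e3]
  have h1 : 0 < ss p (k+1) := ss_pos hp (by omega) (by omega)
  have h2 : 0 < ss p (k+2) := ss_pos hp (by omega) (by omega)
  have h3 : 0 ≤ ss p k := by
    rcases Nat.eq_zero_or_pos k with h | h
    · subst h; unfold ss; norm_num
    · exact (ss_pos hp h (by omega)).le
  have hrec : ss p (k + 2) = lam * ss p (k+1) - ss p k := ss_rec hp hlam k
  have key : lam + -(ss p k / ss p (k+1)) = ss p (k+2) / ss p (k+1) := by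
    rw [hrec]; field_simp; ring
  rw [key]
  constructor
  · positivity
  · field_simp

end T321

namespace T321

variable {p : ℕ} {lam : ℝ}

lemma mem_OmegaInvLam_iff (hp : 2 ≤ p) {tv : ℝ × ℝ} : tv ∈ OmegaInvLam lam p ↔
    ((-(Lseq lam 1) ≤ tv.1 ∧ tv.1 < 1 ∧ 0 ≤ tv.2 ∧ tv.2 ≤ lam / 2) ∨
      (∃ m, 1 ≤ m ∧ m ≤ p - 2 ∧ -(Lseq lam (m+1)) ≤ tv.1 ∧ tv.1 < -(Lseq lam m) ∧
        0 ≤ tv.2 ∧ tv.2 ≤ -phiSeq lam m)) := by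
  unfold OmegaInvLam
  simp only [Set.mem_union, Set.mem_iUnion, Set.mem_prod, Set.mem_Ico, Set.mem_Icc,
    Finset.mem_Icc, exists_prop]
  constructor
  · rintro (⟨n, ⟨hn1, hn2⟩, ⟨ht1, ht2⟩, hv1, hv2⟩ | ⟨⟨ht1, ht2⟩, hv1, hv2⟩)
    · right
      refine ⟨p - n - 1, by omega, by omega, ?_, ?_, hv1, hv2⟩
      · rw [show p - n - 1 + 1 = p - n by omega]; exact ht1
      · exact ht2
    · left; exact ⟨ht1, ht2, hv1, hv2⟩
  · rintro (⟨ht1, ht2, hv1, hv2⟩ | ⟨m, hm1, hm2, ht1, ht2, hv1, hv2⟩)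
    · right; exact ⟨⟨ht1, ht2⟩, hv1, hv2⟩
    · left
      refine ⟨p - m - 1, ⟨by omega, by omega⟩, ⟨?_, ?_⟩, hv1, ?_⟩
      · rw [show p - (p - m - 1) = m + 1 by omega]; exact ht1
      · rw [show p - (p - m - 1) - 1 = m by omega]; exact ht2
      · rw [show p - (p - m - 1) - 1 = m by omega]; exact hv2

lemma mem_OmegaHalf_base {s w : ℝ} (h1 : 0 ≤ s) (h2 : s < lam / 2) (h3 : 0 ≤ w)
    (h4 : w ≤ 1) : ((s, w) : ℝ × ℝ) ∈ OmegaHalf lam p := by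
  right
  exact ⟨⟨h1, h2⟩, h3, h4⟩

lemma mem_OmegaHalf_cell {s w : ℝ} {n : ℕ} (hn1 : 1 ≤ n) (hn2 : n ≤ p - 1)
    (h1 : phiSeq lam (n - 1) ≤ s) (h2 : s < phiSeq lam n) (h3 : 0 ≤ w)
    (h4 : w ≤ Lseq lam n) : ((s, w) : ℝ × ℝ) ∈ OmegaHalf lam p := by
  left
  simp only [Set.mem_iUnion, Set.mem_prod, Set.mem_Ico, Set.mem_Icc, Finset.mem_Icc,
    exists_prop]
  exact ⟨n, ⟨hn1, hn2⟩, ⟨h1, h2⟩, h3, h4⟩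

lemma search_phi (hp : 2 ≤ p) (hlam : lam = 2 * Real.cos (Real.pi / (2 * (p:ℝ)))) :
    ∀ k m (x : ℝ), m + k = p - 1 → phiSeq lam m ≤ x → x < 0 →
      ∃ n, m + 1 ≤ n ∧ n ≤ p - 1 ∧ phiSeq lam (n - 1) ≤ x ∧ x < phiSeq lam n := by
  intro k
  induction k with
  | zero =>
    intro m x hmk h1 h2
    exfalso
    have : m = p - 1 := by omega
    rw [this, phi_last hp hlam] at h1
    linarith
  | succ k ih =>
    intro m x hmk h1 h2
    by_cases hc : x < phiSeq lam (m + 1)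
    · exact ⟨m + 1, le_rfl, by omega, by simpa using h1, hc⟩
    · obtain ⟨n, hn1, hn2, h3, h4⟩ := ih (m + 1) x (by omega) (not_lt.mp hc) h2
      exact ⟨n, by omega, hn2, h3, h4⟩

lemma search_L (hp : 2 ≤ p) (hlam : lam = 2 * Real.cos (Real.pi / (2 * (p:ℝ)))) :
    ∀ k m (x : ℝ), 1 ≤ m → m + k = p - 1 → -(Lseq lam (p - 1)) ≤ x → x < -(Lseq lam m) →
      ∃ m', m ≤ m' ∧ m' ≤ p - 2 ∧ -(Lseq lam (m' + 1)) ≤ x ∧ x < -(Lseq lam m') := by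
  intro k
  induction k with
  | zero =>
    intro m x hm hmk h1 h2
    exfalso
    have : m = p - 1 := by omega
    rw [this] at h2
    linarith
  | succ k ih =>
    intro m x hm hmk h1 h2
    by_cases hc : -(Lseq lam (m + 1)) ≤ x
    · exact ⟨m, le_rfl, by omega, hc, h2⟩
    · obtain ⟨m', hm1, hm2, h3, h4⟩ := ih (m + 1) x (by omega) (by omega) h1 (not_le.mp hc)
      exact ⟨m', by omega, hm2, h3, h4⟩

end T321

namespace T321

variable {p : ℕ} {lam : ℝ}

/-- The pointwise "good" predicate preserved by the natural extension map. -/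
def LG (lam : ℝ) (p : ℕ) (tv : ℝ × ℝ) : Prop :=
  tv ∈ OmegaInvLam lam p ∧ tv.1 ≠ 0 ∧ 0 < tv.2 ∧
    ∀ j, j ≤ p - 1 → tv.2 ≠ -phiSeq lam j

lemma lam_facts (hp : 2 ≤ p) (hlam : lam = 2 * Real.cos (Real.pi / (2 * (p:ℝ)))) :
    0 < lam ∧ 1 < lam ∧ lam < 2 ∧ 2 ≤ lam ^ 2 ∧ 1 / lam ≤ lam / 2 := by
  obtain ⟨hsq, h1⟩ := two_le_lam_sq hp hlam
  have h0 : 0 < lam := by linarith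
  refine ⟨h0, h1, lam_lt_two hp hlam, hsq, ?_⟩
  rw [div_le_div_iff₀ h0 (by norm_num)]
  nlinarith

/-- If `tv ∈ Ω_{1/λ}` and `t < 0` then `t` lies in a cell `[-L_{m+1}, -L_m)` with
height `-φ_m`, for some `0 ≤ m ≤ p-2`. -/
lemma cell_of_neg (hp : 2 ≤ p) (hlam : lam = 2 * Real.cos (Real.pi / (2 * (p:ℝ))))
    {tv : ℝ × ℝ} (h : tv ∈ OmegaInvLam lam p) (ht : tv.1 < 0) :
    ∃ m, m ≤ p - 2 ∧ -(Lseq lam (m + 1)) ≤ tv.1 ∧ tv.1 < -(Lseq lam m) ∧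
      0 ≤ tv.2 ∧ tv.2 ≤ -phiSeq lam m := by
  rcases (mem_OmegaInvLam_iff hp).mp h with ⟨ht1, _, hv1, hv2⟩ | ⟨m, hm1, hm2, h3, h4, h5, h6⟩
  · refine ⟨0, by omega, by simpa using ht1, ?_, hv1, ?_⟩
    · show tv.1 < -(Lseq lam 0)
      show tv.1 < -(0:ℝ)
      simpa using ht
    · rw [phi_zero]; simpa using hv2
  · exact ⟨m, hm2, h3, h4, h5, h6⟩

lemma base_of_nonneg (hp : 2 ≤ p) (hlam : lam = 2 * Real.cos (Real.pi / (2 * (p:ℝ))))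
    {tv : ℝ × ℝ} (h : tv ∈ OmegaInvLam lam p) (ht : 0 ≤ tv.1) :
    tv.1 < 1 ∧ 0 ≤ tv.2 ∧ tv.2 ≤ lam / 2 := by
  rcases (mem_OmegaInvLam_iff hp).mp h with ⟨_, h2, hv1, hv2⟩ | ⟨m, hm1, hm2, _, h4, _, _⟩
  · exact ⟨h2, hv1, hv2⟩
  · exfalso
    have := Lseq_pos hp hlam hm1 (by omega)
    linarith

lemma LG_bounds (hp : 2 ≤ p) (hlam : lam = 2 * Real.cos (Real.pi / (2 * (p:ℝ))))
    {tv : ℝ × ℝ} (h : LG lam p tv) :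
    |tv.1| < 1 ∧ tv.2 ≤ lam / 2 ∧ (0 ≤ tv.1 → tv.2 < lam / 2) := by
  obtain ⟨hmem, ht0, hv0, hbad⟩ := h
  rcases lt_or_ge tv.1 0 with ht | ht
  · obtain ⟨m, hm, h1, h2, _, h4⟩ := cell_of_neg hp hlam hmem ht
    have hL : Lseq lam (m + 1) ≤ lam - 1 := Lseq_le_lam_sub_one hp hlam (by omega) (by omega)
    have hlt : lam < 2 := lam_lt_two hp hlam
    have habs : |tv.1| = -tv.1 := abs_of_neg ht
    have hphile := neg_phi_le hp hlam (show m ≤ p - 1 by omega)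
    refine ⟨by rw [habs]; linarith, by linarith, fun hc => absurd ht (not_lt.mpr hc)⟩
  · obtain ⟨h1, _, h3⟩ := base_of_nonneg hp hlam hmem ht
    have hne : tv.2 ≠ lam / 2 := by
      have := hbad 0 (by omega)
      rw [phi_zero] at this
      simpa using this
    exact ⟨by rw [abs_of_nonneg ht]; exact h1, h3, fun _ => lt_of_le_of_ne h3 hne⟩

lemma d_bounds (hp : 2 ≤ p) (hlam : lam = 2 * Real.cos (Real.pi / (2 * (p:ℝ))))
    {t : ℝ} (ht : t ≠ 0) (h1 : |t| < 1) :
    1 ≤ (rosenD lam (1/lam) t : ℝ) ∧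
      (rosenD lam (1/lam) t : ℝ) * lam ≤ 1 / |t| + lam - 1 ∧
      1 / |t| < (rosenD lam (1/lam) t : ℝ) * lam + 1 := by
  obtain ⟨hl0, hl1, -, -, -⟩ := lam_facts hp hlam
  have habs : 0 < |t| := abs_pos.mpr ht
  obtain ⟨hb1, hb2⟩ := rosenD_bounds (α := 1/lam) hl0 ht
  have hinq : 1 < 1 / |t| := by rw [lt_div_iff₀ habs]; linarith
  have harg : (1:ℝ) < 1 / (lam * |t|) + 1 - 1/lam := by
    have : 1 / lam < 1 / (lam * |t|) := by
      rw [div_lt_div_iff₀ hl0 (by positivity)]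
      nlinarith
    linarith
  have hd1 : (1:ℝ) ≤ (rosenD lam (1/lam) t : ℝ) := by
    have : (1:ℝ) < (rosenD lam (1/lam) t : ℝ) + 1 := by linarith
    have hr : (0:ℝ) < ((rosenD lam (1/lam) t : ℤ) : ℝ) := by linarith
    have h' : (0:ℤ) < rosenD lam (1/lam) t := by exact_mod_cast hr
    exact_mod_cast h'
  refine ⟨hd1, ?_, ?_⟩
  · have := mul_le_mul_of_nonneg_right hb1 hl0.le
    have he : (1 / (lam * |t|) + 1 - 1/lam) * lam = 1/|t| + lam - 1 := by
      field_simp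
    nlinarith [mul_le_mul_of_nonneg_right hb1 hl0.le]
  · have he : (1 / (lam * |t|) + 1 - 1/lam) * lam = 1/|t| + lam - 1 := by
      field_simp
    nlinarith [mul_lt_mul_of_pos_right hb2 hl0]

lemma d_ge_two (hp : 2 ≤ p) (hlam : lam = 2 * Real.cos (Real.pi / (2 * (p:ℝ))))
    {t : ℝ} (ht : t ≠ 0) (h1 : |t| ≤ 1 / (lam + 1)) :
    2 ≤ (rosenD lam (1/lam) t : ℝ) := by
  obtain ⟨hl0, hl1, -, -, -⟩ := lam_facts hp hlam
  have habs : 0 < |t| := abs_pos.mpr ht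
  obtain ⟨hb1, hb2⟩ := rosenD_bounds (α := 1/lam) hl0 ht
  have harg : (2:ℝ) ≤ 1 / (lam * |t|) + 1 - 1/lam := by
    have h2 : lam + 1 ≤ 1 / |t| := by
      rw [le_div_iff₀ habs]
      calc (lam + 1) * |t| ≤ (lam + 1) * (1/(lam+1)) :=
            mul_le_mul_of_nonneg_left h1 (by linarith)
        _ = 1 := by field_simp
    have h3 : (lam + 1) / lam ≤ 1 / (lam * |t|) := by
      rw [div_le_div_iff₀ hl0 (by positivity)]
      calc (lam + 1) * (lam * |t|) = ((lam + 1) * |t|) * lam := by ring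
        _ ≤ 1 * lam := by
            apply mul_le_mul_of_nonneg_right _ hl0.le
            calc (lam + 1) * |t| ≤ (lam + 1) * (1/(lam+1)) :=
                  mul_le_mul_of_nonneg_left h1 (by linarith)
              _ = 1 := by field_simp
        _ = 1 * lam := rfl
    have h4 : (lam + 1) / lam = 1 + 1/lam := by field_simp
    linarith [h3, h4.symm.le]
  have : (2:ℝ) < (rosenD lam (1/lam) t : ℝ) + 1 := by linarith
  have hr : (1:ℝ) < ((rosenD lam (1/lam) t : ℤ) : ℝ) := by linarith
  have h' : (1:ℤ) < rosenD lam (1/lam) t := by exact_mod_cast hr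
  exact_mod_cast h'

lemma d_eq_one (hp : 2 ≤ p) (hlam : lam = 2 * Real.cos (Real.pi / (2 * (p:ℝ))))
    {t : ℝ} (ht : t ≠ 0) (h1 : 1 / (lam + 1) < |t|) (h2 : |t| < 1) :
    rosenD lam (1/lam) t = 1 := by
  obtain ⟨hl0, hl1, -, -, -⟩ := lam_facts hp hlam
  have habs : 0 < |t| := abs_pos.mpr ht
  obtain ⟨hd1, -, -⟩ := d_bounds hp hlam ht h2
  obtain ⟨hb1, hb2⟩ := rosenD_bounds (α := 1/lam) hl0 ht
  have harg : 1 / (lam * |t|) + 1 - 1/lam < 2 := by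
    have h3 : 1 / |t| < lam + 1 := by
      rw [div_lt_iff₀ habs]
      calc (1:ℝ) = (lam + 1) * (1/(lam+1)) := by field_simp
        _ < (lam + 1) * |t| := by
            apply mul_lt_mul_of_pos_left h1 (by linarith)
    have h4 : 1 / (lam * |t|) < (lam + 1)/lam := by
      rw [div_lt_div_iff₀ (by positivity) hl0]
      calc 1 * lam = lam := by ring
        _ = |t| * (1/|t|) * lam := by field_simp
        _ < |t| * (lam + 1) * lam := by
            apply mul_lt_mul_of_pos_right _ hl0
            exact mul_lt_mul_of_pos_left h3 habs
        _ = (lam + 1) * (lam * |t|) := by ring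
    have h5 : (lam + 1) / lam = 1 + 1/lam := by field_simp
    linarith
  have hup : (rosenD lam (1/lam) t : ℝ) < 2 := by linarith
  have h' : rosenD lam (1/lam) t < 2 := by exact_mod_cast hup
  have h'' : (1:ℤ) ≤ rosenD lam (1/lam) t := by exact_mod_cast hd1
  omega

/-- Landing lemma : a point with `t' ∈ [1-λ, 1)` and `0 < v' < 1/λ` is in `Ω_{1/λ}`
and avoids the bad heights. -/
lemma landing_small (hp : 2 ≤ p) (hlam : lam = 2 * Real.cos (Real.pi / (2 * (p:ℝ))))
    {t' v' : ℝ} (ht1 : 1 - lam ≤ t') (ht2 : t' < 1) (hv0 : 0 < v') (hv : v' < 1 / lam) :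
    ((t', v') : ℝ × ℝ) ∈ OmegaInvLam lam p ∧ ∀ j, j ≤ p - 1 → v' ≠ -phiSeq lam j := by
  obtain ⟨hl0, hl1, hl2, hlsq, hhalf⟩ := lam_facts hp hlam
  constructor
  · rw [mem_OmegaInvLam_iff hp]
    by_cases hc : -(Lseq lam 1) ≤ t'
    · left
      exact ⟨hc, ht2, hv0.le, by linarith⟩
    · right
      have hlast : -(Lseq lam (p - 1)) ≤ t' := by
        rw [Lseq_last hp hlam]; linarith
      obtain ⟨m', h1, h2, h3, h4⟩ :=
        search_L hp hlam (p - 2) 1 t' le_rfl (by omega) hlast (not_le.mp hc)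
      refine ⟨m', h1, h2, h3, h4, hv0.le, ?_⟩
      have := inv_lam_le_neg_phi hp hlam h2
      linarith
  · intro j hj hje
    rcases lt_or_ge j (p - 1) with hj' | hj'
    · have := inv_lam_le_neg_phi hp hlam (by omega : j ≤ p - 2)
      rw [← hje] at this
      linarith
    · have hjeq : j = p - 1 := by omega
      rw [hjeq, phi_last hp hlam] at hje
      simp at hje
      linarith

/-- The BadV condition propagates in a negative-`t` cell. -/
lemma badv_propagate (hp : 2 ≤ p) (hlam : lam = 2 * Real.cos (Real.pi / (2 * (p:ℝ))))
    {v v' : ℝ} (hbad : ∀ j, j ≤ p - 1 → v ≠ -phiSeq lam j)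
    (hrel : v' * (lam - v) = 1) (hv' : 0 < v') :
    ∀ j, j ≤ p - 1 → v' ≠ -phiSeq lam j := by
  intro j hj hje
  rcases lt_or_ge j (p - 1) with hj' | hj'
  · obtain ⟨hpos, hid⟩ := phi_inv hp hlam (by omega : j + 1 ≤ p - 1)
    rw [hje] at hrel
    have hphi0 : 0 < -phiSeq lam j := by rw [← hje]; exact hv'
    have : lam - v = lam + phiSeq lam (j + 1) := by
      have h1 : (-phiSeq lam j) * (lam - v) = (-phiSeq lam j) * (lam + phiSeq lam (j+1)) := by
        rw [hrel]
        linarith [hid]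
      exact mul_left_cancel₀ hphi0.ne' h1
    have hveq : v = -phiSeq lam (j + 1) := by linarith
    exact hbad (j + 1) (by omega) hveq
  · have hjeq : j = p - 1 := by omega
    rw [hjeq, phi_last hp hlam] at hje
    simp at hje
    linarith

end T321

namespace T321

variable {p : ℕ} {lam : ℝ}

/-- **Invariance step**: the natural extension map preserves `LG` (given that the new
`t`-coordinate is nonzero). -/
lemma LG_step (hp : 2 ≤ p) (hlam : lam = 2 * Real.cos (Real.pi / (2 * (p:ℝ))))
    {tv : ℝ × ℝ} (h : LG lam p tv) (ht' : (rosenNE lam (1/lam) tv).1 ≠ 0) :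
    LG lam p (rosenNE lam (1/lam) tv) := by
  obtain ⟨hmem, ht0, hv0, hbad⟩ := h
  obtain ⟨hl0, hl1, hl2, hlsq, hhalf⟩ := lam_facts hp hlam
  obtain ⟨habs1, hvle, hvlt⟩ := LG_bounds hp hlam ⟨hmem, ht0, hv0, hbad⟩
  have habs0 : 0 < |tv.1| := abs_pos.mpr ht0
  set D : ℝ := ((rosenD lam (1/lam) tv.1 : ℤ) : ℝ) with hD
  obtain ⟨hd1, hdb1, hdb2⟩ := d_bounds hp hlam ht0 habs1
  set w := rosenNE lam (1/lam) tv with hw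
  have hw1 : w.1 = 1 / |tv.1| - lam * D := by
    show rosenT lam (1/lam) tv.1 = _
    rw [rosenT_eq hl0 ht0]
  have hw2 : w.2 = 1 / (D * lam + Real.sign tv.1 * tv.2) := rfl
  have ht'low : 1 - lam ≤ w.1 := by rw [hw1]; linarith
  have ht'high : w.1 < 1 := by rw [hw1]; linarith
  rcases ht0.lt_or_gt with hneg | hpos
  · -- t < 0
    have hsign : Real.sign tv.1 = -1 := Real.sign_of_neg hneg
    have habsneg : |tv.1| = -tv.1 := abs_of_neg hneg
    obtain ⟨m, hm, hc1, hc2, hc3, hc4⟩ := cell_of_neg hp hlam hmem hneg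
    have hvltm : tv.2 < -phiSeq lam m := lt_of_le_of_ne hc4 (hbad m (by omega))
    have hw2' : w.2 = 1 / (D * lam - tv.2) := by rw [hw2, hsign]; ring_nf
    rcases Nat.eq_zero_or_pos m with hm0 | hm1
    · -- m = 0 : |t| ≤ L₁, digit ≥ 2
      subst hm0
      have hL1 : |tv.1| ≤ 1 / (lam + 1) := by
        rw [habsneg, ← Lseq_one (lam := lam)]
        linarith
      have hd2 : 2 ≤ D := d_ge_two hp hlam ht0 hL1
      have hvhalf : tv.2 < lam / 2 := by
        have : -phiSeq lam 0 = lam/2 := by rw [phi_zero]; ring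
        rw [this] at hvltm
        exact hvltm
      have hden : lam < D * lam - tv.2 := by nlinarith
      have hdenpos : 0 < D * lam - tv.2 := by linarith
      have hv'pos : 0 < w.2 := by rw [hw2']; positivity
      have hv'lt : w.2 < 1 / lam := by
        rw [hw2']
        exact one_div_lt_one_div_of_lt hl0 hden
      have := landing_small hp hlam (t' := w.1) (v' := w.2) ht'low ht'high hv'pos hv'lt
      rw [Prod.mk.eta] at this
      exact ⟨this.1, ht', hv'pos, this.2⟩
    · -- m ≥ 1 : digit = 1
      obtain ⟨m₀, rfl⟩ : ∃ m₀, m = m₀ + 1 := ⟨m - 1, by omega⟩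
      have hLm : Lseq lam 1 ≤ Lseq lam (m₀ + 1) :=
        Lseq_mono hp hlam le_rfl (by omega) (by omega)
      have hgt : 1 / (lam + 1) < |tv.1| := by
        rw [habsneg, ← Lseq_one (lam := lam)]
        linarith
      have hd : rosenD lam (1/lam) tv.1 = 1 := d_eq_one hp hlam ht0 hgt habs1
      have hD1 : D = 1 := by rw [hD, hd]; norm_num
      obtain ⟨hppos, hpid⟩ := phi_inv hp hlam (show m₀ + 1 ≤ p - 1 by omega)
      have hden : lam + phiSeq lam (m₀ + 1) < lam - tv.2 := by linarith
      have hdenpos : 0 < lam - tv.2 := by linarith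
      have hw2'' : w.2 = 1 / (lam - tv.2) := by rw [hw2', hD1]; ring_nf
      have hv'pos : 0 < w.2 := by rw [hw2'']; positivity
      have hphi_eq : -phiSeq lam m₀ = 1 / (lam + phiSeq lam (m₀ + 1)) :=
        eq_one_div_of_mul_eq_one_left (by linarith [hpid])
      have hv'lt : w.2 < -phiSeq lam m₀ := by
        rw [hw2'', hphi_eq]
        exact one_div_lt_one_div_of_lt hppos hden
      have hrel : w.2 * (lam - tv.2) = 1 := by
        rw [hw2'']
        field_simp
      have hbad' : ∀ j, j ≤ p - 1 → w.2 ≠ -phiSeq lam j :=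
        badv_propagate hp hlam hbad hrel hv'pos
      -- t'-interval
      have hLs : Lseq lam (m₀ + 2) = 1 / (lam - Lseq lam (m₀ + 1)) :=
        Lseq_succ (m₀ + 1) (by omega)
      have hgap : 0 < lam - Lseq lam (m₀ + 1) := by
        have := Lseq_le_lam_sub_one hp hlam (show 1 ≤ m₀ + 1 by omega)
          (show m₀ + 1 ≤ p - 1 by omega)
        linarith
      have hL2pos : 0 < Lseq lam (m₀ + 2) := by rw [hLs]; positivity
      have htabs_le : |tv.1| ≤ Lseq lam (m₀ + 2) := by rw [habsneg]; linarith
      have htabs_gt : Lseq lam (m₀ + 1) < |tv.1| := by rw [habsneg]; linarith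
      have ht'lower : -(Lseq lam (m₀ + 1)) ≤ w.1 := by
        have h1 : 1 / Lseq lam (m₀ + 2) ≤ 1 / |tv.1| :=
          one_div_le_one_div_of_le habs0 htabs_le
        have h2 : 1 / Lseq lam (m₀ + 2) = lam - Lseq lam (m₀ + 1) := by
          rw [hLs, one_div_one_div]
        rw [hw1, hD1]
        linarith
      have hL1pos : 0 < Lseq lam (m₀ + 1) := Lseq_pos hp hlam (by omega) (by omega)
      have ht'upper : w.1 < 1 / Lseq lam (m₀ + 1) - lam := by
        have h1 : 1 / |tv.1| < 1 / Lseq lam (m₀ + 1) :=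
          one_div_lt_one_div_of_lt hL1pos htabs_gt
        rw [hw1, hD1]
        linarith
      rcases Nat.eq_zero_or_pos m₀ with hm00 | hm01
      · -- lands in base cell
        subst hm00
        have hup : 1 / Lseq lam (0 + 1) - lam = 1 := by
          rw [Lseq_one]
          field_simp
          ring
        rw [hup] at ht'upper
        have hv'le : w.2 ≤ lam / 2 := by
          have : -phiSeq lam 0 = lam / 2 := by rw [phi_zero]; ring
          rw [this] at hv'lt
          linarith
        have hmem' : w ∈ OmegaInvLam lam p := by
          rw [mem_OmegaInvLam_iff hp]
          left
          exact ⟨by simpa using ht'lower, ht'upper, hv'pos.le, hv'le⟩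
        exact ⟨hmem', ht', hv'pos, hbad'⟩
      · -- lands in cell m₀
        obtain ⟨k, rfl⟩ : ∃ k, m₀ = k + 1 := ⟨m₀ - 1, by omega⟩
        have hLs' : Lseq lam (k + 2) = 1 / (lam - Lseq lam (k + 1)) :=
          Lseq_succ (k + 1) (by omega)
        have hgap' : 0 < lam - Lseq lam (k + 1) := by
          have := Lseq_le_lam_sub_one hp hlam (show 1 ≤ k + 1 by omega)
            (show k + 1 ≤ p - 1 by omega)
          linarith
        have hup : 1 / Lseq lam (k + 1 + 1) - lam = -(Lseq lam (k + 1)) := by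
          rw [hLs', one_div_one_div]
          ring
        rw [hup] at ht'upper
        have hmem' : w ∈ OmegaInvLam lam p := by
          rw [mem_OmegaInvLam_iff hp]
          right
          exact ⟨k + 1, by omega, by omega, ht'lower, ht'upper, hv'pos.le, hv'lt.le⟩
        exact ⟨hmem', ht', hv'pos, hbad'⟩
  · -- t > 0
    have hsign : Real.sign tv.1 = 1 := Real.sign_of_pos hpos
    have hvhalf : tv.2 < lam / 2 := hvlt hpos.le
    have hw2' : w.2 = 1 / (D * lam + tv.2) := by rw [hw2, hsign]; ring_nf
    have hden : lam < D * lam + tv.2 := by nlinarith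
    have hdenpos : 0 < D * lam + tv.2 := by linarith
    have hv'pos : 0 < w.2 := by rw [hw2']; positivity
    have hv'lt : w.2 < 1 / lam := by
      rw [hw2']
      exact one_div_lt_one_div_of_lt hl0 hden
    have := landing_small hp hlam (t' := w.1) (v' := w.2) ht'low ht'high hv'pos hv'lt
    rw [Prod.mk.eta] at this
    exact ⟨this.1, ht', hv'pos, this.2⟩

end T321

namespace T321

variable {p : ℕ} {lam : ℝ}

/-- `M` maps good points of `Ω_{1/λ}` into `Ω_{1/2}`. -/
lemma M_mem (hp : 2 ≤ p) (hlam : lam = 2 * Real.cos (Real.pi / (2 * (p:ℝ))))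
    {tv : ℝ × ℝ} (h : LG lam p tv) : Mmap tv ∈ OmegaHalf lam p := by
  obtain ⟨hmem, ht0, hv0, hbad⟩ := h
  obtain ⟨hl0, hl1, hl2, hlsq, hhalf⟩ := lam_facts hp hlam
  obtain ⟨habs1, hvle, hvlt⟩ := LG_bounds hp hlam ⟨hmem, ht0, hv0, hbad⟩
  rcases ht0.lt_or_gt with hneg | hpos
  · -- t < 0 : M tv = (-v, -t)
    have hM : Mmap tv = (-tv.2, -tv.1) := by rw [Mmap, if_pos hneg]
    obtain ⟨m, hm, hc1, hc2, hc3, hc4⟩ := cell_of_neg hp hlam hmem hneg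
    have hvltm : tv.2 < -phiSeq lam m := lt_of_le_of_ne hc4 (hbad m (by omega))
    obtain ⟨n, hn1, hn2, hs1, hs2⟩ := search_phi hp hlam (p - 1 - m) m (-tv.2)
      (by omega) (by linarith) (by linarith)
    rw [hM]
    apply mem_OmegaHalf_cell (by omega) hn2 hs1 hs2 (by linarith)
    calc -tv.1 ≤ Lseq lam (m + 1) := by linarith
      _ ≤ Lseq lam n := Lseq_mono hp hlam (by omega) (by omega) (by omega)
  · -- t > 0 : M tv = (v, t)
    have hM : Mmap tv = (tv.2, tv.1) := by rw [Mmap, if_neg (not_lt.mpr hpos.le)]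
    obtain ⟨h1, h2, h3⟩ := base_of_nonneg hp hlam hmem hpos.le
    rw [hM]
    exact mem_OmegaHalf_base h2 (hvlt hpos.le) hpos.le h1.le

/-- Mirror formula for the Θs. -/
lemma theta_mirror {tv : ℝ × ℝ} (hv : 0 ≤ tv.2) :
    ThetaPlus (Mmap tv) = ThetaMinus tv ∧ ThetaMinus (Mmap tv) = ThetaPlus tv := by
  unfold ThetaPlus ThetaMinus Mmap
  by_cases ht : tv.1 < 0
  · rw [if_pos ht]
    simp only
    rw [abs_neg, abs_of_nonneg hv, abs_of_neg ht]
    constructor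
    · rw [show -tv.2 * -tv.1 = tv.1 * tv.2 by ring]
    · rw [show -tv.2 * -tv.1 = tv.1 * tv.2 by ring]
  · rw [if_neg ht]
    push_neg at ht
    simp only
    rw [abs_of_nonneg hv, abs_of_nonneg ht]
    constructor
    · rw [show tv.2 * tv.1 = tv.1 * tv.2 by ring]
    · rw [show tv.2 * tv.1 = tv.1 * tv.2 by ring]

end T321

namespace T321

variable {p : ℕ} {lam : ℝ}

lemma Mmap_props {w : ℝ × ℝ} (hw2 : 0 < w.2) :
    |(Mmap w).1| = w.2 ∧ (Mmap w).1 ≠ 0 ∧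
      Real.sign (Mmap w).1 * (Mmap w).2 = w.1 := by
  unfold Mmap
  by_cases h : w.1 < 0
  · rw [if_pos h]
    have hn : -w.2 < 0 := by linarith
    refine ⟨by rw [abs_neg, abs_of_pos hw2], by simp [hw2.ne'], ?_⟩
    rw [Real.sign_of_neg hn]
    ring
  · rw [if_neg h]
    refine ⟨abs_of_pos hw2, hw2.ne', ?_⟩
    rw [Real.sign_of_pos hw2]
    ring

/-- **Conjugation**: `𝒯_{1/2} ∘ M ∘ 𝒯_{1/λ} = M` on good points. -/
lemma conj_step (hp : 2 ≤ p) (hlam : lam = 2 * Real.cos (Real.pi / (2 * (p:ℝ))))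
    {tv : ℝ × ℝ} (h : LG lam p tv) :
    rosenNE lam (1/2) (Mmap (rosenNE lam (1/lam) tv)) = Mmap tv := by
  obtain ⟨hmem, ht0, hv0, hbad⟩ := h
  obtain ⟨hl0, hl1, hl2, hlsq, hhalf⟩ := lam_facts hp hlam
  obtain ⟨habs1, hvle, hvlt⟩ := LG_bounds hp hlam ⟨hmem, ht0, hv0, hbad⟩
  have habs0 : 0 < |tv.1| := abs_pos.mpr ht0
  set D : ℝ := ((rosenD lam (1/lam) tv.1 : ℤ) : ℝ) with hD
  obtain ⟨hd1, hdb1, hdb2⟩ := d_bounds hp hlam ht0 habs1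
  set w := rosenNE lam (1/lam) tv with hw
  set E : ℝ := D * lam + Real.sign tv.1 * tv.2 with hE
  have hw1 : w.1 = 1 / |tv.1| - lam * D := by
    show rosenT lam (1/lam) tv.1 = _
    rw [rosenT_eq hl0 ht0]
  have hw2 : w.2 = 1 / E := rfl
  have hrange : -(lam/2) ≤ Real.sign tv.1 * tv.2 ∧ Real.sign tv.1 * tv.2 < lam/2 := by
    rcases ht0.lt_or_gt with hneg | hpos
    · rw [Real.sign_of_neg hneg]
      constructor
      · nlinarith
      · nlinarith
    · rw [Real.sign_of_pos hpos]
      constructor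
      · nlinarith
      · nlinarith [hvlt hpos.le]
  have hEpos : 0 < E := by
    rw [hE]
    nlinarith [hrange.1]
  have hw2pos : 0 < w.2 := by rw [hw2]; positivity
  obtain ⟨hSabs, hSne, hSsign⟩ := Mmap_props hw2pos
  have hinvS : 1 / (lam * |(Mmap w).1|) = E / lam := by
    rw [hSabs, hw2, mul_one_div, one_div_div]
  have hElam : E / lam = D + Real.sign tv.1 * tv.2 / lam := by
    rw [hE, add_div, mul_div_cancel_right₀ _ hl0.ne']
  have hdig : rosenD lam (1/2) (Mmap w).1 = rosenD lam (1/lam) tv.1 := by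
    apply rosenD_eq_of hl0 hSne
    · rw [hinvS, hElam]
      have hq : -(lam/2)/lam ≤ Real.sign tv.1 * tv.2 / lam :=
        (div_le_div_iff_of_pos_right hl0).mpr hrange.1
      have he : -(lam/2)/lam = -(1/2 : ℝ) := by field_simp
      rw [he] at hq
      rw [← hD]
      linarith
    · rw [hinvS, hElam]
      have hq : Real.sign tv.1 * tv.2 / lam < (lam/2)/lam :=
        (div_lt_div_iff_of_pos_right hl0).mpr hrange.2
      have he : (lam/2)/lam = (1/2 : ℝ) := by field_simp
      rw [he] at hq
      rw [← hD]
      linarith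
  have hfst : rosenT lam (1/2) (Mmap w).1 = Real.sign tv.1 * tv.2 := by
    rw [rosenT_eq hl0 hSne, hSabs, hw2, one_div_one_div, hdig, ← hD, hE]
    ring
  have hden : ((rosenD lam (1/2) (Mmap w).1 : ℤ) : ℝ) * lam +
      Real.sign (Mmap w).1 * (Mmap w).2 = 1 / |tv.1| := by
    rw [hdig, hSsign, hw1, ← hD]
    ring
  have hfinal : rosenNE lam (1/2) (Mmap w) = (Real.sign tv.1 * tv.2, |tv.1|) := by
    apply Prod.ext_iff.mpr
    constructor
    · exact hfst
    · show 1 / (((rosenD lam (1/2) (Mmap w).1 : ℤ) : ℝ) * lam +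
        Real.sign (Mmap w).1 * (Mmap w).2) = |tv.1|
      rw [hden, one_div_one_div]
  rw [hfinal]
  rcases ht0.lt_or_gt with hneg | hpos
  · rw [Mmap, if_pos hneg, Real.sign_of_neg hneg, abs_of_neg hneg]
    norm_num
  · rw [Mmap, if_neg (not_lt.mpr hpos.le), Real.sign_of_pos hpos, abs_of_pos hpos]
    norm_num


end T321

namespace T321

variable {p : ℕ} {lam α : ℝ}

lemma rosenNE_iter_fst (lam α : ℝ) : ∀ (i : ℕ) (tv : ℝ × ℝ),
    ((rosenNE lam α)^[i] tv).1 = (rosenT lam α)^[i] tv.1 := by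
  intro i
  induction i with
  | zero => intro tv; rfl
  | succ k ih =>
    intro tv
    rw [Function.iterate_succ_apply, Function.iterate_succ_apply, ih]
    rfl

lemma T_pre_countable (lam α : ℝ) {C : Set ℝ} (hC : C.Countable) :
    ((rosenT lam α) ⁻¹' C).Countable := by
  have hsub : (rosenT lam α) ⁻¹' C ⊆
      {0} ∪ ⋃ y ∈ C, ⋃ (d : ℤ), ({1 / (y + lam * d)} ∪ {-(1 / (y + lam * d))}) := by
    intro t ht
    by_cases h0 : t = 0
    · left; exact h0
    · right
      have hT : rosenT lam α t = Real.sign t / t - lam * (rosenD lam α t : ℝ) := by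
        rw [rosenT]; rw [if_neg h0]
      set y := rosenT lam α t with hy
      have hmem : y ∈ C := ht
      have hst : Real.sign t / t = y + lam * (rosenD lam α t : ℝ) := by
        rw [hT]; ring
      simp only [Set.mem_iUnion, Set.mem_union, Set.mem_singleton_iff]
      refine ⟨y, hmem, rosenD lam α t, ?_⟩
      rcases lt_or_gt_of_ne h0 with hneg | hpos
      · right
        have hsg : Real.sign t / t = -(1/t) := by rw [Real.sign_of_neg hneg]; ring
        have key : y + lam * (rosenD lam α t : ℝ) = -(1/t) := by rw [← hst, hsg]
        rw [key]
        field_simp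
      · left
        have hsg : Real.sign t / t = 1/t := by rw [Real.sign_of_pos hpos]
        have key : y + lam * (rosenD lam α t : ℝ) = 1/t := by rw [← hst, hsg]
        rw [key, one_div_one_div]
  apply Set.Countable.mono hsub
  apply Set.Countable.union (Set.countable_singleton 0)
  apply Set.Countable.biUnion hC
  intro y _
  apply Set.countable_iUnion
  intro d
  exact (Set.countable_singleton _).union (Set.countable_singleton _)

lemma iter_zero_countable (lam α : ℝ) (i : ℕ) :
    {t : ℝ | (rosenT lam α)^[i] t = 0}.Countable := by
  induction i with
  | zero => simpa using Set.countable_singleton (0:ℝ)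
  | succ k ih =>
    have : {t : ℝ | (rosenT lam α)^[k+1] t = 0} =
        (rosenT lam α) ⁻¹' {t : ℝ | (rosenT lam α)^[k] t = 0} := by
      ext t
      simp [Function.iterate_succ_apply]
    rw [this]
    exact T_pre_countable lam α ih

open MeasureTheory in
lemma null_vert {A : Set ℝ} (hA : A.Countable) :
    volume {tv : ℝ × ℝ | tv.1 ∈ A} = 0 := by
  have : {tv : ℝ × ℝ | tv.1 ∈ A} = A ×ˢ (Set.univ : Set ℝ) := by
    ext tv; simp
  rw [this, Measure.volume_eq_prod, Measure.prod_prod, hA.measure_zero, zero_mul]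

open MeasureTheory in
lemma null_horiz (c : ℝ) : volume {tv : ℝ × ℝ | tv.2 = c} = 0 := by
  have : {tv : ℝ × ℝ | tv.2 = c} = (Set.univ : Set ℝ) ×ˢ ({c} : Set ℝ) := by
    ext ⟨a, b⟩
    simp [Set.mem_prod, eq_comm]
  rw [this, Measure.volume_eq_prod, Measure.prod_prod]
  simp

lemma v_nonneg (hp : 2 ≤ p) {tv : ℝ × ℝ} (h : tv ∈ OmegaInvLam lam p) : 0 ≤ tv.2 := by
  rcases (mem_OmegaInvLam_iff hp).mp h with ⟨_, _, hv, _⟩ | ⟨m, _, _, _, _, hv, _⟩ <;>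
    exact hv

end T321

/-- **Theorem 3.21.**  For even `q = 2p` and Lebesgue-almost every
`(t,v) ∈ Ω_{1/λ}`, writing `(t_i,v_i) = 𝒯_{1/λ}^i(t,v)` and `(s_i,w_i) = M(t_i,v_i)`
for `0 ≤ i ≤ ℓ`: each `(s_i,w_i)` lies in `Ω_{1/2}`, `𝒯_{1/2}(s_{i+1},w_{i+1}) = (s_i,w_i)`,
and `Θ⁺(s_i,w_i) = Θ⁻(t_i,v_i)`, `Θ⁻(s_i,w_i) = Θ⁺(t_i,v_i)`; hence any `ℓ+2`
consecutive approximation coefficients of `(Ω_{1/λ}, 𝒯_{1/λ})` arise, reversed, in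
`(Ω_{1/2}, 𝒯_{1/2})`. -/
theorem theta_sequence_dual (p : ℕ) (hp : 2 ≤ p) (lam : ℝ)
    (hlam : lam = 2 * Real.cos (Real.pi / (2 * (p : ℝ)))) (ℓ : ℕ) :
    ∀ᵐ tv : ℝ × ℝ, tv ∈ OmegaInvLam lam p →
      (∀ i : ℕ, i ≤ ℓ → Mmap ((rosenNE lam (1 / lam))^[i] tv) ∈ OmegaHalf lam p) ∧
      (∀ i : ℕ, i < ℓ →
        rosenNE lam (1 / 2) (Mmap ((rosenNE lam (1 / lam))^[i + 1] tv)) =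
          Mmap ((rosenNE lam (1 / lam))^[i] tv)) ∧
      (∀ i : ℕ, i ≤ ℓ →
        ThetaPlus (Mmap ((rosenNE lam (1 / lam))^[i] tv)) =
            ThetaMinus ((rosenNE lam (1 / lam))^[i] tv) ∧
          ThetaMinus (Mmap ((rosenNE lam (1 / lam))^[i] tv)) =
            ThetaPlus ((rosenNE lam (1 / lam))^[i] tv)) := by
  classical
  set N : Set (ℝ × ℝ) :=
    (⋃ i ∈ Finset.range (ℓ + 1), {tv : ℝ × ℝ | (rosenT lam (1/lam))^[i] tv.1 = 0}) ∪
      ({tv : ℝ × ℝ | tv.2 = 0} ∪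
        ⋃ j ∈ Finset.range p, {tv : ℝ × ℝ | tv.2 = -phiSeq lam j}) with hNdef
  have hNnull : MeasureTheory.volume N = 0 := by
    rw [hNdef]
    apply MeasureTheory.measure_union_null
    · apply MeasureTheory.measure_biUnion_null_iff (Finset.range (ℓ+1)).countable_toSet
        |>.mpr
      intro i _
      exact T321.null_vert (T321.iter_zero_countable lam (1/lam) i)
    · apply MeasureTheory.measure_union_null (T321.null_horiz 0)
      apply MeasureTheory.measure_biUnion_null_iff (Finset.range p).countable_toSet |>.mpr
      intro j _
      exact T321.null_horiz (-phiSeq lam j)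
  rw [MeasureTheory.ae_iff]
  apply MeasureTheory.measure_mono_null _ hNnull
  intro tv htv
  simp only [Set.mem_setOf_eq, _root_.not_imp] at htv
  obtain ⟨hmem, hnP⟩ := htv
  by_contra hN'
  apply hnP
  -- unpack the complement of N
  have hT0 : ∀ i, i ≤ ℓ → (rosenT lam (1/lam))^[i] tv.1 ≠ 0 := by
    intro i hi hcon
    apply hN'
    rw [hNdef]
    left
    simp only [Set.mem_iUnion, Set.mem_setOf_eq, Finset.mem_coe, Finset.mem_range]
    exact ⟨i, by omega, hcon⟩
  have hv0' : tv.2 ≠ 0 := by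
    intro hcon
    apply hN'
    rw [hNdef]
    right; left
    exact hcon
  have hbad : ∀ j, j ≤ p - 1 → tv.2 ≠ -phiSeq lam j := by
    intro j hj hcon
    apply hN'
    rw [hNdef]
    right; right
    simp only [Set.mem_iUnion, Set.mem_setOf_eq, Finset.mem_coe, Finset.mem_range]
    exact ⟨j, by omega, hcon⟩
  have hLG0 : T321.LG lam p tv := by
    refine ⟨hmem, ?_, ?_, hbad⟩
    · have := hT0 0 (by omega)
      simpa using this
    · exact lt_of_le_of_ne (T321.v_nonneg hp hmem) (Ne.symm hv0')
  have hLGi : ∀ i, i ≤ ℓ → T321.LG lam p ((rosenNE lam (1/lam))^[i] tv) := by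
    intro i
    induction i with
    | zero => intro _; simpa using hLG0
    | succ k ih =>
      intro hk
      have h1 := ih (by omega)
      rw [Function.iterate_succ_apply']
      apply T321.LG_step hp hlam h1
      rw [← Function.iterate_succ_apply' (rosenNE lam (1/lam)) k tv,
        T321.rosenNE_iter_fst]
      exact hT0 (k+1) hk
  refine ⟨?_, ?_, ?_⟩
  · intro i hi
    exact T321.M_mem hp hlam (hLGi i hi)
  · intro i hi
    have := T321.conj_step hp hlam (hLGi i (by omega))
    rw [Function.iterate_succ_apply' (rosenNE lam (1/lam)) i tv]
    exact this
  · intro i hi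
    exact T321.theta_mirror (hLGi i hi).2.2.1.le
end

section
/- Let t, v be real numbers with t ≠ 0, v > 0 and |t·v| < 1. Set ε = sgn(t), Θ' = v/(1+tv) and Θ = |t|/(1+tv) (the two consecutive approximation coefficients Θ_{n−1} and Θ_n attached to (t,v)). Then 1 − 4εΘ'Θ ≥ 0, and t and v are recovered from (Θ', Θ, ε) by t = (1 − √(1 − 4εΘ'Θ))/(2Θ') and v = ε·(1 − √(1 − 4εΘ'Θ))/(2Θ). -/
/-- **Lemma 3.22** (recovering `(t,v)` from two consecutive approximation
coefficients).  For `t ≠ 0`, `v > 0`, `|tv| < 1`, with `ε = sgn(t)`,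
`Θ' = Θ_{n-1} = v/(1+tv)` and `Θ = Θ_n = |t|/(1+tv)`, one has `1 - 4εΘ'Θ ≥ 0`,
`t = (1 - √(1-4εΘ'Θ))/(2Θ')` and `v = ε(1 - √(1-4εΘ'Θ))/(2Θ)`. -/
theorem t_v_from_thetas (t v : ℝ) (ht : t ≠ 0) (hv : 0 < v) (htv : |t * v| < 1)
    (ε Θ' Θ : ℝ) (hε : ε = Real.sign t)
    (hΘ' : Θ' = v / (1 + t * v)) (hΘ : Θ = |t| / (1 + t * v)) :
    0 ≤ 1 - 4 * ε * Θ' * Θ ∧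
    t = (1 - Real.sqrt (1 - 4 * ε * Θ' * Θ)) / (2 * Θ') ∧
    v = ε * (1 - Real.sqrt (1 - 4 * ε * Θ' * Θ)) / (2 * Θ) := by
  obtain ⟨h1, h2⟩ := abs_lt.mp htv
  have hD : 0 < 1 + t * v := by linarith
  have hεt : ε * |t| = t := by
    rcases lt_or_gt_of_ne ht with h | h
    · rw [hε, Real.sign_of_neg h, abs_of_neg h]; ring
    · rw [hε, Real.sign_of_pos h, abs_of_pos h]; ring
  have hεt' : ε * t = |t| := by
    rcases lt_or_gt_of_ne ht with h | h
    · rw [hε, Real.sign_of_neg h, abs_of_neg h]; ring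
    · rw [hε, Real.sign_of_pos h, abs_of_pos h]; ring
  have habs : |t| ≠ 0 := abs_ne_zero.mpr ht
  have key : 1 - 4 * ε * Θ' * Θ = ((1 - t * v) / (1 + t * v)) ^ 2 := by
    rw [hΘ', hΘ]
    have e : 4 * ε * (v / (1 + t * v)) * (|t| / (1 + t * v))
        = 4 * (ε * |t|) * v / (1 + t * v) ^ 2 := by field_simp
    rw [e, hεt]
    field_simp
    ring
  have hsq : Real.sqrt (1 - 4 * ε * Θ' * Θ) = (1 - t * v) / (1 + t * v) := by
    rw [key, Real.sqrt_sq (div_nonneg (by linarith) hD.le)]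
  have h1m : 1 - Real.sqrt (1 - 4 * ε * Θ' * Θ) = 2 * t * v / (1 + t * v) := by
    rw [hsq]; field_simp; ring
  refine ⟨by rw [key]; positivity, ?_, ?_⟩
  · rw [h1m, hΘ']
    field_simp
  · rw [h1m, hΘ]
    field_simp
    have hD' : (1 + v * t) ≠ 0 := by linarith [mul_comm t v]
    rw [mul_div_assoc, div_self hD', mul_one, hεt']
end
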